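/- arXiv:0705.2787 — 6 statements merged into one kernel-verified Lean document; each statement's English description precedes it below -/
import Mathlib

section
/- Let P and S be finite nonempty sets with |S| ≥ 2. For every set W of functions f : P → S there exist m ∈ ℕ and, for each i < m, nonempty finite sets antᵢ, consᵢ ⊆ P × S (the antecedent and consequent atoms of the i-th basic implication) such that W = { f : P → S | ∀ i < m, ( (∀ (p,s) ∈ antᵢ, f p = s) → (∃ (q,t) ∈ consᵢ, f q = t) ) }. In other words, every predicate on tables (given full identification information) is expressible as a finite conjunction of basic implications. -/
/-- **Completeness of basic implications** (Theorem 1 of the paper).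
Given full identification information, every predicate `W` on tables
(functions `f : P → S` assigning sensitive values to people) is expressible
as a finite conjunction of basic implications, where a basic implication is
encoded by a nonempty finite set of antecedent atoms and a nonempty finite
set of consequent atoms (an atom being a pair `(p, s)` meaning `f p = s`). -/
theorem completeness_basic_implications
    {P S : Type*} [Fintype P] [Fintype S] [Nonempty P]
    (hS : 2 ≤ Fintype.card S) (W : Set (P → S)) :
    ∃ (m : ℕ) (ant cons : Fin m → Finset (P × S)),
      (∀ i, (ant i).Nonempty) ∧ (∀ i, (cons i).Nonempty) ∧
      W = { f : P → S | ∀ i : Fin m,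
              (∀ pr ∈ ant i, f pr.1 = pr.2) → (∃ pr ∈ cons i, f pr.1 = pr.2) } := by
  classical
  obtain ⟨p₀⟩ := ‹Nonempty P›
  have hne : ∀ g : P → S, ∃ s : S, s ≠ g p₀ := fun g =>
    Fintype.exists_ne_of_one_lt_card (by omega) (g p₀)
  choose t ht using hne
  set L : List (P → S) := (Finset.univ.filter (fun g => g ∉ W)).toList with hL
  have hmemL : ∀ g : P → S, g ∈ L ↔ g ∉ W := by
    intro g
    simp [hL, Finset.mem_toList]
  refine ⟨L.length, fun i => Finset.univ.image (fun p => (p, L.get i p)),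
    fun i => {(p₀, t (L.get i))}, ?_, ?_, ?_⟩
  · intro i
    exact ⟨(p₀, L.get i p₀), Finset.mem_image_of_mem _ (Finset.mem_univ p₀)⟩
  · intro i; exact ⟨_, Finset.mem_singleton_self _⟩
  · ext f
    simp only [Set.mem_setOf_eq, Finset.mem_image, Finset.mem_singleton]
    constructor
    · intro hf i hant
      exfalso
      have hfg : f = L.get i := by
        funext p
        exact hant (p, L.get i p) ⟨p, Finset.mem_univ p, rfl⟩
      have : L.get i ∈ L := List.get_mem L i
      rw [hmemL] at this
      exact this (hfg ▸ hf)
    · intro h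
      by_contra hf
      obtain ⟨i, hi⟩ := List.get_of_mem ((hmemL f).2 hf)
      have := h i (by rintro pr ⟨p, -, rfl⟩; rw [hi])
      obtain ⟨pr, hpr, hval⟩ := this
      subst hpr
      rw [← hi] at hval
      exact ht (L.get i) hval.symm
end

section
/- Let μ be a probability measure on a measurable space Ω, let E, F be measurable sets, and let (T_i)_{i<k} and (V_i)_{i<k} be finite families of measurable sets. Then μ[E | F ∩ ⋂_{i<k} (T_iᶜ ∪ V_i)] ≤ μ[E | F ∩ ⋂_{i<k} (T_iᶜ ∪ E)]. (This is the event-level form of Lemma 1 of the paper: replacing the consequent of each implication θ_i → φ_i by the target formula φ cannot decrease the conditional probability of φ; the set T_iᶜ ∪ V_i is the event of the implication θ_i → φ_i.) -/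
open MeasureTheory ProbabilityTheory

/-- **Lemma 1 of the paper** (event-level form). Replacing the consequent `V i` of each
implication `T i → V i` by the target event `E` cannot decrease the conditional
probability of `E`. An implication of events `T → V` is modeled by the event `Tᶜ ∪ V`. -/
theorem cond_le_of_common_consequent
    {Ω : Type*} [MeasurableSpace Ω] (μ : Measure Ω) [IsProbabilityMeasure μ]
    (E F : Set Ω) (hE : MeasurableSet E) (hF : MeasurableSet F)
    (k : ℕ) (T V : Fin k → Set Ω)
    (hT : ∀ i, MeasurableSet (T i)) (hV : ∀ i, MeasurableSet (V i)) :
    μ[E | F ∩ ⋂ i : Fin k, ((T i)ᶜ ∪ V i)] ≤ μ[E | F ∩ ⋂ i : Fin k, ((T i)ᶜ ∪ E)] := by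
  set A := F ∩ ⋂ i : Fin k, ((T i)ᶜ ∪ V i) with hAdef
  set B := F ∩ ⋂ i : Fin k, ((T i)ᶜ ∪ E) with hBdef
  have mA : MeasurableSet A :=
    hF.inter (MeasurableSet.iInter fun i => (hT i).compl.union (hV i))
  have mB : MeasurableSet B :=
    hF.inter (MeasurableSet.iInter fun i => (hT i).compl.union hE)
  have h1 : A ∩ E ⊆ B ∩ E := by
    rintro x ⟨⟨hxF, _⟩, hxE⟩
    exact ⟨⟨hxF, Set.mem_iInter.2 fun i => Or.inr hxE⟩, hxE⟩
  have h2 : B \ E ⊆ A \ E := by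
    rintro x ⟨⟨hxF, hxI⟩, hxE⟩
    refine ⟨⟨hxF, Set.mem_iInter.2 fun i => ?_⟩, hxE⟩
    rcases Set.mem_iInter.1 hxI i with h | h
    · exact Or.inl h
    · exact absurd h hxE
  rw [cond_apply mA, cond_apply mB]
  rcases eq_or_ne (μ B) 0 with hB0 | hB0
  · have hBE : μ (B ∩ E) = 0 := measure_inter_null_of_null_left E hB0
    have hAE : μ (A ∩ E) = 0 :=
      le_antisymm (le_trans (measure_mono h1) hBE.le) zero_le
    simp [hAE, hBE]
  rcases eq_or_ne (μ A) 0 with hA0 | hA0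
  · have hAE : μ (A ∩ E) = 0 := measure_inter_null_of_null_left E hA0
    simp [hAE]
  have hAt : μ A ≠ ⊤ := measure_ne_top μ A
  have hBt : μ B ≠ ⊤ := measure_ne_top μ B
  have key : μ (A ∩ E) * μ B ≤ μ (B ∩ E) * μ A := by
    rw [← measure_inter_add_diff B hE, ← measure_inter_add_diff A hE,
      mul_add, mul_add]
    exact add_le_add (mul_comm _ _).le
      (mul_le_mul' (measure_mono h1) (measure_mono h2))
  rw [← ENNReal.div_eq_inv_mul, ← ENNReal.div_eq_inv_mul,
    ENNReal.div_le_iff hA0 hAt, mul_comm, ← mul_div_assoc,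
    ENNReal.le_div_iff_mul_le (Or.inl hB0) (Or.inl hBt)]
  calc μ (A ∩ E) * μ B ≤ μ (B ∩ E) * μ A := key
    _ = μ A * μ (B ∩ E) := mul_comm _ _
end

section
/- Let μ be a probability measure on a measurable space Ω, let B, F be measurable sets, and for each i < k let (A_{i,j})_{j<m_i} be a nonempty finite family of measurable sets with T_i = ⋂_{j<m_i} A_{i,j}. Then there exists a choice of indices j_i < m_i such that μ[B | F ∩ ⋂_{i<k} (T_iᶜ ∪ B)] ≤ μ[B | F ∩ ⋂_{i<k} (A_{i,j_i}ᶜ ∪ B)]. (This is the event-level form of Lemma 2 of the paper: the conjunctive antecedent θ_i of each implication θ_i → B can be replaced by a single atom A_i of θ_i without decreasing the conditional probability of B.) -/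
open MeasureTheory ProbabilityTheory

/-- **Lemma 2 of the paper** (event-level form). The conjunctive antecedent
`T i = ⋂ j, A i j` of each implication `T i → B` can be replaced by a single atom
`A i (j i)` of the conjunction without decreasing the conditional probability of `B`.
An implication of events `T → V` is modeled by the event `Tᶜ ∪ V`. -/
theorem cond_le_single_atom_antecedent
    {Ω : Type*} [MeasurableSpace Ω] (μ : Measure Ω) [IsProbabilityMeasure μ]
    (B F : Set Ω) (hB : MeasurableSet B) (hF : MeasurableSet F)
    (k : ℕ) (m : Fin k → ℕ) (hm : ∀ i, 1 ≤ m i)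
    (A : (i : Fin k) → Fin (m i) → Set Ω) (hA : ∀ i j, MeasurableSet (A i j)) :
    ∃ j : (i : Fin k) → Fin (m i),
      μ[B | F ∩ ⋂ i : Fin k, ((⋂ j' : Fin (m i), A i j')ᶜ ∪ B)] ≤
        μ[B | F ∩ ⋂ i : Fin k, ((A i (j i))ᶜ ∪ B)] := by
  refine ⟨fun i => ⟨0, hm i⟩, ?_⟩
  set j : (i : Fin k) → Fin (m i) := fun i => ⟨0, hm i⟩
  set C : Set Ω := F ∩ ⋂ i : Fin k, ((⋂ j' : Fin (m i), A i j')ᶜ ∪ B) with hC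
  set D : Set Ω := F ∩ ⋂ i : Fin k, ((A i (j i))ᶜ ∪ B) with hD
  have hCm : MeasurableSet C := by
    apply hF.inter
    exact MeasurableSet.iInter fun i =>
      ((MeasurableSet.iInter fun j' => hA i j').compl).union hB
  have hDm : MeasurableSet D := by
    apply hF.inter
    exact MeasurableSet.iInter fun i => ((hA i (j i)).compl).union hB
  have hDC : D ⊆ C := by
    apply Set.inter_subset_inter_right
    apply Set.iInter_mono
    intro i
    apply Set.union_subset_union_left
    exact Set.compl_subset_compl.mpr (Set.iInter_subset _ (j i))
  have hBC : C ∩ B = F ∩ B := by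
    rw [hC, Set.inter_assoc]
    congr 1
    apply Set.inter_eq_right.mpr
    exact Set.subset_iInter fun i => Set.subset_union_right
  have hBD : D ∩ B = F ∩ B := by
    rw [hD, Set.inter_assoc]
    congr 1
    apply Set.inter_eq_right.mpr
    exact Set.subset_iInter fun i => Set.subset_union_right
  rw [cond_apply hCm, cond_apply hDm, hBC, hBD]
  exact mul_le_mul_left (ENNReal.inv_le_inv.mpr (measure_mono hDC)) _
end

section
/- Let μ be a probability measure on a measurable space Ω, let E, F be measurable sets, and let (T_i)_{i<k}, (V_i)_{i<k}, (A_i)_{i<k} be finite families of measurable sets with T_i ⊆ A_i for every i < k. Then μ[E | F ∩ ⋂_{i<k} (T_iᶜ ∪ V_i)] ≤ μ[E | F ∩ ⋂_{i<k} (A_iᶜ ∪ E)]. (This is the event-level form of Theorem 3 of the paper: for any conjunction of k basic implications θ_i → φ_i, there is a conjunction of k simple implications A_i → E, all sharing the same consequent E and with each antecedent A_i a single atom containing θ_i, that yields at least as large a conditional probability of E; hence maximum disclosure over conjunctions of k basic implications is attained by k simple implications with a common consequent.) -/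
open MeasureTheory ProbabilityTheory

private lemma ennreal_frac_mono {a b c d : ENNReal} (hac : a ≤ c) (hdb : d ≤ b)
    (hb : b ≠ ⊤) (hc : c ≠ ⊤) : (a + b)⁻¹ * a ≤ (c + d)⁻¹ * c := by
  rcases eq_or_ne a 0 with ha0 | ha0
  · simp [ha0]
  have hc0 : c ≠ 0 := fun h => ha0 (le_antisymm (h ▸ hac) zero_le)
  have hdt : d ≠ ⊤ := fun h => hb (top_le_iff.mp (h ▸ hdb))
  have ha : a ≠ ⊤ := fun h => hc (top_le_iff.mp (h ▸ hac))
  rw [← ENNReal.div_eq_inv_mul, ← ENNReal.div_eq_inv_mul,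
    ENNReal.le_div_iff_mul_le (Or.inr hc0) (Or.inr hc), div_eq_mul_inv, mul_right_comm, ← div_eq_mul_inv,
    ENNReal.div_le_iff_le_mul (Or.inl (by simp [ha0])) (Or.inl (by simp [ha, hb]))]
  calc a * (c + d) = a * c + a * d := by ring
    _ ≤ c * a + c * b := add_le_add (by rw [mul_comm]) (mul_le_mul' hac hdb)
    _ = c * (a + b) := by ring

/-- **Theorem 3 of the paper** (event-level form). For any conjunction of `k` basic
implications `T i → V i`, replacing each implication by a simple implication `A i → E`
with common consequent `E` and antecedent a single atom `A i ⊇ T i` yields at least as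
large a conditional probability of `E`. Hence maximum disclosure over conjunctions of
`k` basic implications is attained by `k` simple implications sharing one consequent. -/
theorem cond_le_simple_implications_common_consequent
    {Ω : Type*} [MeasurableSpace Ω] (μ : Measure Ω) [IsProbabilityMeasure μ]
    (E F : Set Ω) (hE : MeasurableSet E) (hF : MeasurableSet F)
    (k : ℕ) (T V A : Fin k → Set Ω)
    (hT : ∀ i, MeasurableSet (T i)) (hV : ∀ i, MeasurableSet (V i))
    (hA : ∀ i, MeasurableSet (A i)) (hTA : ∀ i, T i ⊆ A i) :
    μ[E | F ∩ ⋂ i : Fin k, ((T i)ᶜ ∪ V i)] ≤ μ[E | F ∩ ⋂ i : Fin k, ((A i)ᶜ ∪ E)] := by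
  set G := F ∩ ⋂ i : Fin k, ((T i)ᶜ ∪ V i) with hGdef
  set H := F ∩ ⋂ i : Fin k, ((A i)ᶜ ∪ E) with hHdef
  have hG : MeasurableSet G :=
    hF.inter (MeasurableSet.iInter fun i => (hT i).compl.union (hV i))
  have hH : MeasurableSet H :=
    hF.inter (MeasurableSet.iInter fun i => (hA i).compl.union hE)
  rw [cond_apply hG, cond_apply hH]
  have hGsplit : μ G = μ (G ∩ E) + μ (G ∩ Eᶜ) := by
    rw [← measure_inter_add_diff G hE, Set.diff_eq]
  have hHsplit : μ H = μ (H ∩ E) + μ (H ∩ Eᶜ) := by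
    rw [← measure_inter_add_diff H hE, Set.diff_eq]
  rw [hGsplit, hHsplit]
  apply ennreal_frac_mono
  · apply measure_mono
    rintro x ⟨⟨hxF, -⟩, hxE⟩
    exact ⟨⟨hxF, Set.mem_iInter.mpr fun i => Or.inr hxE⟩, hxE⟩
  · apply measure_mono
    rintro x ⟨⟨hxF, hxI⟩, hxE⟩
    refine ⟨⟨hxF, Set.mem_iInter.mpr fun i => ?_⟩, hxE⟩
    rcases Set.mem_iInter.mp hxI i with h | h
    · exact Or.inl fun hxT => h (hTA i hxT)
    · exact absurd h hxE
  · exact (measure_lt_top μ _).ne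
  · exact (measure_lt_top μ _).ne
end

section
/- Fix n ∈ ℕ, a finite type V, and s : Fin n → V, and let μ be the uniform probability measure on Equiv.Perm (Fin n). Let l ≤ n, let p : Fin l → Fin n be injective, and let W : Fin l → Finset V be a nested family, W_{i+1} ⊆ W_i for all i, and set m_i = |{x : Fin n | s x ∈ W_i}|. Assume i + m_i ≤ n for all i < l. Then μ( { π | ∀ i < l, s (π (p i)) ∉ W_i } ) = ∏_{i<l} (n − i − m_i)/(n − i). (This is the exact value computed in Lemma 3 of the paper; the paper's instance takes W_i to be the set of the k_i most frequent sensitive values in the bucket, with k_0 ≥ k_1 ≥ … ≥ k_{l−1}, so that ∏_{i<l} (n_b − i − Σ_{j<k_i} n_b(s_b^j))/(n_b − i) is the minimum probability of the conjunction of negated atoms.) -/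
open MeasureTheory ProbabilityTheory

noncomputable instance (n : ℕ) : MeasurableSpace (Equiv.Perm (Fin n)) := ⊤

open Finset

lemma countAux (n : ℕ) : ∀ (l : ℕ) (B : Fin l → Finset (Fin n)),
    (∀ i j : Fin l, i ≤ j → B j ⊆ B i) → (∀ i : Fin l, (i : ℕ) + (B i).card ≤ n) →
    (Finset.univ.filter
        (fun f : Fin l → Fin n => Function.Injective f ∧ ∀ i, f i ∉ B i)).card
      = ∏ i : Fin l, (n - (i : ℕ) - (B i).card) := by
  intro l
  induction l with
  | zero =>
      intro B _ _
      simp [Function.Injective, Subsingleton.elim]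
  | succ l ih =>
      intro B hnest hbd
      have h0 : ∀ i : Fin (l+1), B i ⊆ B 0 := fun i => hnest 0 i (Fin.zero_le i)
      have hT : (Finset.univ.filter
          (fun f : Fin (l+1) → Fin n => Function.Injective f ∧ ∀ i, f i ∉ B i))
          = ((B 0)ᶜ).biUnion (fun y =>
              (univ.filter (fun g : Fin l → Fin n =>
                Function.Injective g ∧ ∀ i : Fin l, g i ∉ insert y (B i.succ))).image
                (fun g : Fin l → Fin n => (Fin.cons y g : Fin (l+1) → Fin n))) := by
        ext f
        simp only [mem_filter, mem_univ, true_and, mem_biUnion, mem_image, mem_compl]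
        constructor
        · rintro ⟨hinj, havoid⟩
          refine ⟨f 0, havoid 0, Fin.tail f, ⟨?_, ?_⟩, Fin.cons_self_tail f⟩
          · exact fun a b hab => Fin.succ_injective _ (hinj hab)
          · intro i
            simp only [mem_insert, Fin.tail]
            rintro (h | h)
            · exact Fin.succ_ne_zero i (hinj h)
            · exact havoid i.succ h
        · rintro ⟨y, hy, g, ⟨hginj, hgavoid⟩, rfl⟩
          constructor
          · intro a b hab
            rcases Fin.eq_zero_or_eq_succ a with rfl | ⟨a', rfl⟩ <;>
              rcases Fin.eq_zero_or_eq_succ b with rfl | ⟨b', rfl⟩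
            · rfl
            · simp only [Fin.cons_zero, Fin.cons_succ] at hab
              exact absurd (hab ▸ mem_insert_self y (B b'.succ)) (hgavoid b')
            · simp only [Fin.cons_zero, Fin.cons_succ] at hab
              exact absurd (by rw [hab]; exact mem_insert_self y (B a'.succ)) (hgavoid a')
            · simp only [Fin.cons_succ] at hab
              exact congrArg Fin.succ (hginj hab)
          · intro i
            rcases Fin.eq_zero_or_eq_succ i with rfl | ⟨i', rfl⟩
            · simpa using hy
            · simp only [Fin.cons_succ]
              exact fun h => hgavoid i' (mem_insert_of_mem h)
      rw [hT, card_biUnion]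
      · have hcard : ∀ y ∈ (B 0)ᶜ,
            ((univ.filter (fun g : Fin l → Fin n =>
              Function.Injective g ∧ ∀ i : Fin l, g i ∉ insert y (B i.succ))).image
                (fun g : Fin l → Fin n => (Fin.cons y g : Fin (l+1) → Fin n))).card
            = ∏ i : Fin l, (n - ((i : ℕ)+1) - (B i.succ).card) := by
          intro y hy
          rw [card_image_of_injective _ (fun g g' h => funext fun i => by simpa using (congrFun h i.succ : _))]
          have hyB : ∀ i : Fin l, y ∉ B i.succ := fun i h =>
            (mem_compl.mp hy) (h0 i.succ h)
          have hins : ∀ i : Fin l, (insert y (B i.succ)).card = (B i.succ).card + 1 :=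
            fun i => card_insert_of_notMem (hyB i)
          rw [ih (fun i => insert y (B i.succ))
            (fun i j hij => insert_subset_insert _ (hnest i.succ j.succ (by simpa using hij)))
            (fun i => by
              have h := hbd i.succ
              rw [hins i]
              simp only [Fin.val_succ] at h
              omega)]
          exact Finset.prod_congr rfl fun i _ => by rw [hins i]; omega
        rw [Finset.sum_congr rfl hcard, Finset.sum_const, card_compl, Fintype.card_fin,
          Fin.prod_univ_succ]
        simp [Fin.val_succ]
      · intro a ha b hb hab
        simp only [disjoint_left, mem_image]
        rintro f ⟨g, _, rfl⟩ ⟨g', _, hgg'⟩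
        have h0' : b = a := by simpa using congrFun hgg' 0
        exact hab h0'.symm

lemma fixCount (n l : ℕ) (p : Fin l → Fin n) (hp : Function.Injective p) :
    (univ.filter (fun τ : Equiv.Perm (Fin n) => ∀ i, τ (p i) = p i)).card
      = (n - l).factorial := by
  classical
  have h1 : (univ.filter (fun τ : Equiv.Perm (Fin n) => ∀ i, τ (p i) = p i)).card
      = Fintype.card {σ : Equiv.Perm (Fin n) // ∀ a, ¬ (a ∉ Set.range p) → σ a = a} := by
    rw [Fintype.card_subtype]
    congr 1
    apply filter_congr
    intro σ _
    simp only [not_not, eq_iff_iff]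
    constructor
    · rintro h a ⟨i, rfl⟩
      exact h i
    · intro h i
      exact h (p i) ⟨i, rfl⟩
  rw [h1, ← Fintype.card_congr (Equiv.Perm.subtypeEquivSubtypePerm
    (fun x => x ∉ Set.range p)), Fintype.card_perm, Fintype.card_subtype_compl]
  congr 2
  rw [Fintype.card_fin]
  have : Fintype.card {x // x ∈ Set.range p} = l := by
    rw [show Fintype.card {x // x ∈ Set.range p} = Fintype.card (Set.range p) from rfl,
      ← Fintype.card_congr (Equiv.ofInjective p hp), Fintype.card_fin]
  omega

lemma permCount (n l : ℕ) (p : Fin l → Fin n) (hp : Function.Injective p)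
    (B : Fin l → Finset (Fin n)) :
    (univ.filter (fun π : Equiv.Perm (Fin n) => ∀ i, π (p i) ∉ B i)).card
      = (univ.filter (fun f : Fin l → Fin n =>
          Function.Injective f ∧ ∀ i, f i ∉ B i)).card * (n - l).factorial := by
  classical
  rw [Finset.card_eq_sum_card_fiberwise
    (f := fun (π : Equiv.Perm (Fin n)) (i : Fin l) => π (p i))
    (t := univ.filter (fun f : Fin l → Fin n =>
      Function.Injective f ∧ ∀ i, f i ∉ B i))
    (fun π hπ => by
      simp only [mem_coe, mem_filter, mem_univ, true_and] at hπ ⊢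
      exact ⟨fun a b hab => hp (π.injective hab), hπ⟩)]
  rw [Finset.sum_congr rfl (fun f hf => ?_), Finset.sum_const, smul_eq_mul]
  simp only [mem_filter, mem_univ, true_and] at hf
  obtain ⟨hfinj, hfav⟩ := hf
  -- the fiber over f
  have hfib : ((univ.filter (fun π : Equiv.Perm (Fin n) => ∀ i, π (p i) ∉ B i)).filter
      (fun π => (fun i => π (p i)) = f))
      = univ.filter (fun π : Equiv.Perm (Fin n) => ∀ i, π (p i) = f i) := by
    ext π
    simp only [mem_filter, mem_univ, true_and, funext_iff]
    constructor
    · rintro ⟨_, h⟩; exact h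
    · intro h
      exact ⟨fun i => (h i) ▸ hfav i, h⟩
  rw [hfib, ← fixCount n l p hp]
  -- construct π0 with π0 (p i) = f i
  obtain ⟨π0, hπ0⟩ : ∃ π0 : Equiv.Perm (Fin n), ∀ i, π0 (p i) = f i := by
    refine ⟨Equiv.extendSubtype ((Equiv.ofInjective p hp).symm.trans
      (Equiv.ofInjective f hfinj)), fun i => ?_⟩
    rw [Equiv.extendSubtype_apply_of_mem _ (p i) ⟨i, rfl⟩]
    have h2 : (Equiv.ofInjective p hp).symm ⟨p i, ⟨i, rfl⟩⟩ = i := by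
      rw [Equiv.symm_apply_eq]; rfl
    simp [Equiv.trans_apply, h2]
  apply Finset.card_nbij' (fun π => π0⁻¹ * π) (fun τ => π0 * τ)
  · intro π hπ
    simp only [mem_coe, mem_filter, mem_univ, true_and] at hπ ⊢
    intro i
    rw [Equiv.Perm.mul_apply, hπ i, ← hπ0 i]
    exact π0.symm_apply_apply (p i)
  · intro τ hτ
    simp only [mem_coe, mem_filter, mem_univ, true_and] at hτ ⊢
    intro i
    rw [Equiv.Perm.mul_apply, hτ i, hπ0 i]
  · intro π _; group
  · intro τ _; group


/-- **Exact value computed in Lemma 3 of the paper.** In a bucket of size `n` with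
sensitive values `s`, under the uniform (random-worlds) measure on permutations,
the probability that each of `l` distinct people `p i` avoids a nested family of
value sets `W i` (with `m i` tuples of the bucket carrying a value of `W i`) is
exactly `∏ i, (n − i − m i)/(n − i)`. -/
theorem uniformOn_perm_avoid_nested_eq
    (n : ℕ) (V : Type*) [Fintype V] [DecidableEq V] (s : Fin n → V)
    (l : ℕ) (hl : l ≤ n) (p : Fin l → Fin n) (hp : Function.Injective p)
    (W : Fin l → Finset V) (hW : ∀ i j : Fin l, i ≤ j → W j ⊆ W i)
    (m : Fin l → ℕ)
    (hm : ∀ i, m i = (Finset.univ.filter (fun x : Fin n => s x ∈ W i)).card)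
    (hbound : ∀ i : Fin l, (i : ℕ) + m i ≤ n) :
    uniformOn (Set.univ : Set (Equiv.Perm (Fin n)))
        {π : Equiv.Perm (Fin n) | ∀ i : Fin l, s (π (p i)) ∉ W i} =
      ∏ i : Fin l, ((n - (i : ℕ) - m i : ℕ) : ENNReal) / ((n - (i : ℕ) : ℕ) : ENNReal) := by
  classical
  set B : Fin l → Finset (Fin n) := fun i => univ.filter (fun x => s x ∈ W i) with hB
  have hset : {π : Equiv.Perm (Fin n) | ∀ i : Fin l, s (π (p i)) ∉ W i}
      = ↑(univ.filter (fun π : Equiv.Perm (Fin n) => ∀ i, π (p i) ∉ B i)) := by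
    ext π; simp [hB]
  have hBnest : ∀ i j : Fin l, i ≤ j → B j ⊆ B i := by
    intro i j hij x hx
    simp only [hB, mem_filter, mem_univ, true_and] at hx ⊢
    exact hW i j hij hx
  have hBcard : ∀ i, (B i).card = m i := fun i => (hm i).symm
  have hBbd : ∀ i : Fin l, (i : ℕ) + (B i).card ≤ n := fun i => by
    rw [hBcard]; exact hbound i
  have hcount := countAux n l B hBnest hBbd
  simp only [hBcard] at hcount
  have hperm := permCount n l p hp B
  rw [hset, uniformOn_univ, Measure.count_apply_finset, hperm, hcount]
  have hcardP : (Fintype.card (Equiv.Perm (Fin n)) : ENNReal) = (n.factorial : ℕ) := by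
    rw [Fintype.card_perm, Fintype.card_fin]
  rw [hcardP]
  have hb_pos : ∀ i : Fin l, 0 < n - (i : ℕ) := by
    intro i
    have h1 : (i : ℕ) < l := i.2
    exact Nat.sub_pos_of_lt (lt_of_lt_of_le h1 hl)
  have hprodb : (((∏ i : Fin l, (n - (i : ℕ))) : ℕ) : ENNReal) ≠ 0 := by
    exact_mod_cast Finset.prod_ne_zero_iff.mpr (fun i _ => (hb_pos i).ne')
  have hrhs : (∏ i : Fin l, ((n - (i : ℕ) - m i : ℕ) : ENNReal) / ((n - (i : ℕ) : ℕ) : ENNReal))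
      = (↑(∏ i : Fin l, (n - (i : ℕ) - m i)) : ENNReal)
        / (↑(∏ i : Fin l, (n - (i : ℕ))) : ENNReal) := by
    symm
    rw [Nat.cast_prod, Nat.cast_prod, div_eq_mul_inv, ENNReal.prod_inv_distrib (by
        intro x _ y _ _
        exact Or.inl (by exact_mod_cast (hb_pos x).ne')),
      ← Finset.prod_mul_distrib]
    exact Finset.prod_congr rfl fun i _ => (div_eq_mul_inv _ _).symm
  rw [hrhs, ENNReal.div_eq_div_iff hprodb (ENNReal.natCast_ne_top _)
    (by exact_mod_cast n.factorial_ne_zero) (ENNReal.natCast_ne_top _)]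
  rw [← Nat.cast_mul, ← Nat.cast_mul, Nat.cast_inj]
  have hfact : (∏ i : Fin l, (n - (i : ℕ))) * (n - l).factorial = n.factorial := by
    rw [Fin.prod_univ_eq_prod_range (fun i => n - i) l, ← Nat.descFactorial_eq_prod_range,
      mul_comm, Nat.factorial_mul_descFactorial hl]
  calc (∏ i : Fin l, (n - (i : ℕ))) * ((∏ i : Fin l, (n - (i : ℕ) - m i)) * (n - l).factorial)
      = ((∏ i : Fin l, (n - (i : ℕ))) * (n - l).factorial) * ∏ i : Fin l, (n - (i : ℕ) - m i) := by
        ring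
    _ = n.factorial * ∏ i : Fin l, (n - (i : ℕ) - m i) := by rw [hfact]
end

section
/- Fix n ∈ ℕ, a finite type B of bucket labels, and β : Fin n → B, and let G = { π : Equiv.Perm (Fin n) | ∀ x, β (π x) = β x } be the (nonempty, finite) set of bucket-preserving permutations, equipped with the uniform probability measure μ. Let b₀, …, b_{m−1} ∈ B be pairwise distinct bucket labels and let E₀, …, E_{m−1} ⊆ G be events such that each E_j depends only on bucket b_j, i.e., for all π, π' ∈ G, if π x = π' x for every x with β x = b_j then π ∈ E_j ↔ π' ∈ E_j. Then μ(⋂_{j<m} E_j) = ∏_{j<m} μ(E_j). (Events concerning different buckets of a bucketization are mutually independent, since the permutation of sensitive values in each bucket is chosen independently.) -/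
open MeasureTheory ProbabilityTheory
namespace BucketIndepAux
open ENNReal

instance (n : ℕ) : MeasurableSingletonClass (Equiv.Perm (Fin n)) :=
  ⟨fun _ => MeasurableSpace.measurableSet_top⟩

lemma count_eq_ncard {Ω : Type*} [MeasurableSpace Ω] [MeasurableSingletonClass Ω]
    (s : Set Ω) (hs : s.Finite) : Measure.count s = (s.ncard : ℝ≥0∞) := by
  rw [Measure.count_apply_finite s hs, Set.ncard_eq_toFinset_card s hs]

lemma uo {n : ℕ} (s t : Set (Equiv.Perm (Fin n))) :
    uniformOn s t = ((s.ncard : ℝ≥0∞))⁻¹ * ((s ∩ t).ncard) := by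
  rw [uniformOn, cond_apply MeasurableSpace.measurableSet_top,
      count_eq_ncard _ (Set.toFinite _), count_eq_ncard _ (Set.toFinite _)]

lemma ncard_prod {α β : Type*} (s : Set α) (t : Set β) :
    (s ×ˢ t).ncard = s.ncard * t.ncard := by
  rw [← Nat.card_coe_set_eq, ← Nat.card_coe_set_eq, ← Nat.card_coe_set_eq,
    Nat.card_congr (Equiv.Set.prod s t), Nat.card_prod]

lemma key {n : ℕ} {B : Type*} (β : Fin n → B) (L : Set B)
    (A C : Set (Equiv.Perm (Fin n)))
    (hA : A ⊆ {π : Equiv.Perm (Fin n) | ∀ x, β (π x) = β x})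
    (hC : C ⊆ {π : Equiv.Perm (Fin n) | ∀ x, β (π x) = β x})
    (hAdep : ∀ π π' : Equiv.Perm (Fin n), (∀ x, β (π x) = β x) → (∀ x, β (π' x) = β x) →
      (∀ x, β x ∈ L → π x = π' x) → (π ∈ A ↔ π' ∈ A))
    (hCdep : ∀ π π' : Equiv.Perm (Fin n), (∀ x, β (π x) = β x) → (∀ x, β (π' x) = β x) →
      (∀ x, β x ∉ L → π x = π' x) → (π ∈ C ↔ π' ∈ C)) :
    uniformOn {π : Equiv.Perm (Fin n) | ∀ x, β (π x) = β x} (A ∩ C) =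
      uniformOn {π : Equiv.Perm (Fin n) | ∀ x, β (π x) = β x} A *
      uniformOn {π : Equiv.Perm (Fin n) | ∀ x, β (π x) = β x} C := by
  classical
  set G : Set (Equiv.Perm (Fin n)) := {π | ∀ x, β (π x) = β x} with hGdef
  have hGmem : ∀ π : Equiv.Perm (Fin n), π ∈ G ↔ ∀ x, β (π x) = β x := fun _ => Iff.rfl
  have mulG : ∀ {π τ : Equiv.Perm (Fin n)}, π ∈ G → τ ∈ G → π * τ ∈ G := by
    intro π τ hπ hτ x
    simp only [Equiv.Perm.mul_apply]
    rw [hπ (τ x), hτ x]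
  have invG : ∀ {π : Equiv.Perm (Fin n)}, π ∈ G → π⁻¹ ∈ G := by
    intro π hπ x
    have := hπ (π⁻¹ x)
    rw [Equiv.Perm.inv_def, Equiv.apply_symm_apply] at this
    exact this.symm
  set G₁ : Set (Equiv.Perm (Fin n)) := {π | π ∈ G ∧ ∀ x, β x ∉ L → π x = x} with hG1def
  set G₂ : Set (Equiv.Perm (Fin n)) := {π | π ∈ G ∧ ∀ x, β x ∈ L → π x = x} with hG2def
  have hG1sub : G₁ ⊆ G := fun _ h => h.1
  have hG2sub : G₂ ⊆ G := fun _ h => h.1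
  -- injectivity of multiplication on G₁ ×ˢ G₂
  have hinj : Set.InjOn (fun p : Equiv.Perm (Fin n) × Equiv.Perm (Fin n) => p.1 * p.2)
      (G₁ ×ˢ G₂) := by
    rintro ⟨σ, τ⟩ ⟨hσ, hτ⟩ ⟨σ', τ'⟩ ⟨hσ', hτ'⟩ h
    simp only at h
    have hσσ : σ = σ' := by
      ext x
      by_cases hx : β x ∈ L
      · have h1 : (σ * τ) x = σ x := by
          simp [Equiv.Perm.mul_apply, hτ.2 x hx]
        have h2 : (σ' * τ') x = σ' x := by
          simp [Equiv.Perm.mul_apply, hτ'.2 x hx]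
        rw [← h1, h, h2]
      · rw [hσ.2 x hx, hσ'.2 x hx]
    refine Prod.ext hσσ ?_
    rw [hσσ] at h
    exact mul_left_cancel h
  -- decomposition
  have hdecomp : ∀ π ∈ G, ∃ σ, σ ∈ G₁ ∧ ∃ τ, τ ∈ G₂ ∧ π = σ * τ ∧
      (∀ x, β x ∈ L → σ x = π x) := by
    intro π hπ
    set f : Fin n → Fin n := fun x => if β x ∈ L then π x else x with hfdef
    have hfinj : Function.Injective f := by
      intro x y hxy
      by_cases hx : β x ∈ L <;> by_cases hy : β y ∈ L <;>
        simp only [hfdef, hx, hy, if_pos, if_neg, if_true, if_false] at hxy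
      · exact π.injective hxy
      · exfalso; apply hy; rw [← hxy, hπ x]; exact hx
      · exfalso; apply hx; rw [hxy, hπ y]; exact hy
      · exact hxy
    set σ : Equiv.Perm (Fin n) :=
      Equiv.ofBijective f (Finite.injective_iff_bijective.mp hfinj) with hσdef
    have hσap : ∀ x, σ x = f x := fun x => rfl
    have hσG : σ ∈ G := by
      intro x
      rw [hσap]
      by_cases hx : β x ∈ L
      · simp only [hfdef, hx, if_true]; exact hπ x
      · simp only [hfdef, hx, if_false]
    have hσ1 : σ ∈ G₁ := ⟨hσG, fun x hx => by rw [hσap]; simp only [hfdef, hx, if_false]⟩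
    have hσL : ∀ x, β x ∈ L → σ x = π x := fun x hx => by
      rw [hσap]; simp only [hfdef, hx, if_true]
    refine ⟨σ, hσ1, σ⁻¹ * π, ⟨mulG (invG hσG) hπ, ?_⟩, by group, hσL⟩
    intro x hx
    simp only [Equiv.Perm.mul_apply]
    rw [← hσL x hx, Equiv.Perm.inv_def, Equiv.symm_apply_apply]
  -- membership transfers
  have htransA : ∀ {σ τ : Equiv.Perm (Fin n)}, σ ∈ G₁ → τ ∈ G₂ → (σ * τ ∈ A ↔ σ ∈ A) := by
    intro σ τ hσ hτ
    refine hAdep _ _ (mulG hσ.1 hτ.1) hσ.1 fun x hx => ?_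
    simp only [Equiv.Perm.mul_apply, hτ.2 x hx]
  have htransC : ∀ {σ τ : Equiv.Perm (Fin n)}, σ ∈ G₁ → τ ∈ G₂ → (σ * τ ∈ C ↔ τ ∈ C) := by
    intro σ τ hσ hτ
    refine hCdep _ _ (mulG hσ.1 hτ.1) hτ.1 fun x hx => ?_
    simp only [Equiv.Perm.mul_apply]
    exact hσ.2 (τ x) (by rw [hτ.1 x]; exact hx)
  -- image computation
  have key_img : ∀ (A' C' : Set (Equiv.Perm (Fin n))),
      (∀ π π' : Equiv.Perm (Fin n), π ∈ G → π' ∈ G →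
        (∀ x, β x ∈ L → π x = π' x) → (π ∈ A' ↔ π' ∈ A')) →
      (∀ π π' : Equiv.Perm (Fin n), π ∈ G → π' ∈ G →
        (∀ x, β x ∉ L → π x = π' x) → (π ∈ C' ↔ π' ∈ C')) →
      (fun p : Equiv.Perm (Fin n) × Equiv.Perm (Fin n) => p.1 * p.2) ''
        ((A' ∩ G₁) ×ˢ (C' ∩ G₂)) = A' ∩ C' ∩ G := by
    intro A' C' hA' hC'
    ext π
    constructor
    · rintro ⟨⟨σ, τ⟩, ⟨⟨hσA, hσ1⟩, hτC, hτ2⟩, rfl⟩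
      exact ⟨⟨(hA' _ _ (mulG hσ1.1 hτ2.1) hσ1.1
          (fun x hx => by simp [Equiv.Perm.mul_apply, hτ2.2 x hx])).mpr hσA,
        (hC' _ _ (mulG hσ1.1 hτ2.1) hτ2.1
          (fun x hx => by
            simp only [Equiv.Perm.mul_apply]
            exact hσ1.2 (τ x) (by rw [hτ2.1 x]; exact hx))).mpr hτC⟩,
        mulG hσ1.1 hτ2.1⟩
    · rintro ⟨⟨hπA, hπC⟩, hπG⟩
      obtain ⟨σ, hσ1, τ, hτ2, hπeq, hσL⟩ := hdecomp π hπG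
      have hσA : σ ∈ A' := (hA' π σ hπG hσ1.1 (fun x hx => (hσL x hx).symm)).mp hπA
      have hτC : τ ∈ C' := by
        refine (hC' π τ hπG hτ2.1 fun x hx => ?_).mp hπC
        have hτx : τ x = π x := by
          have h1 : (σ * τ) x = π x := by rw [← hπeq]
          have h2 : σ (τ x) = π x := h1
          have h3 : β (τ x) ∉ L := by rw [hτ2.1 x]; exact hx
          rwa [hσ1.2 (τ x) h3] at h2
        exact hτx.symm
      exact ⟨⟨σ, τ⟩, ⟨⟨hσA, hσ1⟩, hτC, hτ2⟩, hπeq.symm⟩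
  -- cardinalities
  have hdepG : ∀ π π' : Equiv.Perm (Fin n), π ∈ G → π' ∈ G →
      (∀ x, β x ∈ L → π x = π' x) → (π ∈ G ↔ π' ∈ G) := fun π π' h h' _ => by simp [h, h']
  have hdepG' : ∀ π π' : Equiv.Perm (Fin n), π ∈ G → π' ∈ G →
      (∀ x, β x ∉ L → π x = π' x) → (π ∈ G ↔ π' ∈ G) := fun π π' h h' _ => by simp [h, h']
  have hAdep' : ∀ π π' : Equiv.Perm (Fin n), π ∈ G → π' ∈ G →
      (∀ x, β x ∈ L → π x = π' x) → (π ∈ A ↔ π' ∈ A) := fun π π' h h' hh => hAdep π π' h h' hh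
  have hCdep' : ∀ π π' : Equiv.Perm (Fin n), π ∈ G → π' ∈ G →
      (∀ x, β x ∉ L → π x = π' x) → (π ∈ C ↔ π' ∈ C) := fun π π' h h' hh => hCdep π π' h h' hh
  have hcard : ∀ (A' C' : Set (Equiv.Perm (Fin n))),
      A' ⊆ G₁ → C' ⊆ G₂ → ∀ (X : Set (Equiv.Perm (Fin n))),
      (fun p : Equiv.Perm (Fin n) × Equiv.Perm (Fin n) => p.1 * p.2) '' (A' ×ˢ C') = X →
      X.ncard = A'.ncard * C'.ncard := by
    intro A' C' hA1 hC2 X hX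
    rw [← hX, Set.ncard_image_of_injOn (hinj.mono (Set.prod_mono hA1 hC2)), ncard_prod]
  have hGG1 : G ∩ G₁ = G₁ := Set.inter_eq_self_of_subset_right hG1sub
  have hGG2 : G ∩ G₂ = G₂ := Set.inter_eq_self_of_subset_right hG2sub
  have img1 := key_img G G hdepG hdepG'
  rw [hGG1, hGG2, Set.inter_self, Set.inter_self] at img1
  have img2 := key_img A G hAdep' hdepG'
  rw [hGG2, Set.inter_eq_self_of_subset_left hA,
    Set.inter_eq_self_of_subset_left hA] at img2
  have img3 := key_img G C hdepG hCdep'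
  rw [hGG1, Set.inter_eq_self_of_subset_right hC,
    Set.inter_eq_self_of_subset_left hC] at img3
  have img4 := key_img A C hAdep' hCdep'
  rw [Set.inter_eq_self_of_subset_left (Set.inter_subset_left.trans hA)] at img4
  have cG := hcard G₁ G₂ le_rfl le_rfl G img1
  have cA := hcard (A ∩ G₁) G₂ Set.inter_subset_right le_rfl A img2
  have cC := hcard G₁ (C ∩ G₂) le_rfl Set.inter_subset_right C img3
  have cAC := hcard (A ∩ G₁) (C ∩ G₂) Set.inter_subset_right Set.inter_subset_right
    (A ∩ C) img4
  -- nonemptiness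
  have h1G1 : (1 : Equiv.Perm (Fin n)) ∈ G₁ := ⟨fun x => rfl, fun x _ => rfl⟩
  have h1G2 : (1 : Equiv.Perm (Fin n)) ∈ G₂ := ⟨fun x => rfl, fun x _ => rfl⟩
  have hg1 : G₁.ncard ≠ 0 := Set.ncard_ne_zero_of_mem h1G1 (Set.toFinite _)
  have hg2 : G₂.ncard ≠ 0 := Set.ncard_ne_zero_of_mem h1G2 (Set.toFinite _)
  -- final computation
  rw [uo, uo, uo, Set.inter_eq_self_of_subset_right hA,
    Set.inter_eq_self_of_subset_right hC,
    Set.inter_eq_self_of_subset_right ((Set.inter_subset_left).trans hA),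
    cG, cA, cC, cAC]
  push_cast
  have hne : ((G₁.ncard : ℝ≥0∞) * G₂.ncard) ≠ 0 := by
    simp [hg1, hg2]
  have htop : ((G₁.ncard : ℝ≥0∞) * G₂.ncard) ≠ ⊤ := by
    finiteness
  calc ((G₁.ncard : ℝ≥0∞) * G₂.ncard)⁻¹ * ((A ∩ G₁).ncard * (C ∩ G₂).ncard)
      = ((G₁.ncard : ℝ≥0∞) * G₂.ncard)⁻¹ * ((A ∩ G₁).ncard * (C ∩ G₂).ncard) *
        (((G₁.ncard : ℝ≥0∞) * G₂.ncard)⁻¹ * ((G₁.ncard : ℝ≥0∞) * G₂.ncard)) := by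
        rw [ENNReal.inv_mul_cancel hne htop, mul_one]
    _ = ((G₁.ncard : ℝ≥0∞) * G₂.ncard)⁻¹ * ((A ∩ G₁).ncard * G₂.ncard) *
        (((G₁.ncard : ℝ≥0∞) * G₂.ncard)⁻¹ * (G₁.ncard * (C ∩ G₂).ncard)) := by
        ring

lemma aux {n : ℕ} {B : Type*} (β : Fin n → B) :
    ∀ (m : ℕ) (b : Fin m → B), Function.Injective b →
    ∀ (E : Fin m → Set (Equiv.Perm (Fin n))),
      (∀ j, E j ⊆ {π : Equiv.Perm (Fin n) | ∀ x, β (π x) = β x}) →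
      (∀ (j : Fin m), ∀ π π' : Equiv.Perm (Fin n),
        (∀ x, β (π x) = β x) → (∀ x, β (π' x) = β x) →
        (∀ x : Fin n, β x = b j → π x = π' x) → (π ∈ E j ↔ π' ∈ E j)) →
    uniformOn {π : Equiv.Perm (Fin n) | ∀ x, β (π x) = β x} (⋂ j, E j) =
      ∏ j, uniformOn {π : Equiv.Perm (Fin n) | ∀ x, β (π x) = β x} (E j) := by
  intro m
  set G : Set (Equiv.Perm (Fin n)) := {π | ∀ x, β (π x) = β x} with hGdef
  have hGfin : G.Finite := Set.toFinite _
  have hGne : G.Nonempty := ⟨1, fun x => rfl⟩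
  have hprob : IsProbabilityMeasure (uniformOn G) :=
    uniformOn_isProbabilityMeasure hGfin hGne
  induction m with
  | zero =>
    intro b hb E hEG hdep
    rw [Set.iInter_of_empty E]
    simp [measure_univ]
  | succ m ih =>
    intro b hb E hEG hdep
    have hsplit : (⋂ j, E j) = E 0 ∩ ⋂ j : Fin m, E j.succ := by
      ext π
      simp only [Set.mem_iInter, Set.mem_inter_iff, Fin.forall_fin_succ]
    set X : Set (Equiv.Perm (Fin n)) := ⋂ j : Fin m, E j.succ with hXdef
    have hE0X : E 0 ∩ (G ∩ X) = E 0 ∩ X := by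
      rw [← Set.inter_assoc, Set.inter_eq_self_of_subset_left (hEG 0)]
    have hkey := key β {b 0} (E 0) (G ∩ X) (hEG 0) Set.inter_subset_left
      (fun π π' hπ hπ' hagree => hdep 0 π π' hπ hπ'
        (fun x hx => hagree x (Set.mem_singleton_iff.mpr hx)))
      (fun π π' hπ hπ' hagree => by
        simp only [Set.mem_inter_iff, Set.mem_iInter, hXdef]
        constructor
        · rintro ⟨h1, h2⟩
          refine ⟨hπ', fun j => (hdep j.succ π π' hπ hπ' ?_).mp (h2 j)⟩
          intro x hx
          refine hagree x ?_
          simp only [Set.mem_singleton_iff]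
          intro hx0
          exact Fin.succ_ne_zero j (hb ((hx0 ▸ hx.symm : b j.succ = b 0)))
        · rintro ⟨h1, h2⟩
          refine ⟨hπ, fun j => (hdep j.succ π π' hπ hπ' ?_).mpr (h2 j)⟩
          intro x hx
          refine hagree x ?_
          simp only [Set.mem_singleton_iff]
          intro hx0
          exact Fin.succ_ne_zero j (hb ((hx0 ▸ hx.symm : b j.succ = b 0))))
    rw [hsplit, ← hE0X, hkey, uniformOn_inter_self hGfin,
      ih (fun j => b j.succ) (fun j j' h => Fin.succ_injective m (hb h))
        (fun j => E j.succ) (fun j => hEG j.succ) (fun j => hdep j.succ),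
      Fin.prod_univ_succ]

end BucketIndepAux

/-- **Independence across buckets.** Under the uniform measure on the (nonempty, finite)
set `G` of bucket-preserving permutations of a bucketization `β`, events `E j ⊆ G` that
depend only on pairwise distinct buckets `b j` are mutually independent: the probability
of their intersection is the product of their probabilities. -/
theorem uniformOn_bucketPreserving_iInter_eq_prod
    (n : ℕ) (B : Type*) (β : Fin n → B)
    (G : Set (Equiv.Perm (Fin n)))
    (hG : G = {π : Equiv.Perm (Fin n) | ∀ x, β (π x) = β x})
    (m : ℕ) (b : Fin m → B) (hb : Function.Injective b)
    (E : Fin m → Set (Equiv.Perm (Fin n))) (hEG : ∀ j, E j ⊆ G)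
    (hdep : ∀ (j : Fin m), ∀ π π' : Equiv.Perm (Fin n), π ∈ G → π' ∈ G →
      (∀ x : Fin n, β x = b j → π x = π' x) → (π ∈ E j ↔ π' ∈ E j)) :
    uniformOn G (⋂ j : Fin m, E j) = ∏ j : Fin m, uniformOn G (E j) := by
  subst hG
  exact BucketIndepAux.aux β m b hb E hEG hdep
end
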